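/- arXiv:2104.07970 — 5 statements merged into one kernel-verified Lean document; each statement's English description precedes it below -/
import Mathlib

section
/- Let u, v ∈ ℝ^m be unit vectors with nonnegative coordinates sorted in decreasing order (u_1 ≥ u_2 ≥ ... ≥ u_m ≥ 0 and similarly for v, with ‖u‖ = ‖v‖ = 1). Then the inner product satisfies u·v ≥ 1/√m. -/
open Finset

private lemma Tbound (m k : ℕ) (hk : 1 ≤ k) (hkm : k ≤ m) (b : ℕ → ℝ)
    (hb0 : ∀ n, 0 ≤ b n) (hbd : ∀ i j, i ≤ j → j < m → b j ≤ b i)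
    (hbn : ∑ n ∈ range m, b n ^ 2 = 1) :
    Real.sqrt k / Real.sqrt m ≤ ∑ n ∈ range k, b n := by
  have hm1 : 1 ≤ m := hk.trans hkm
  set T := ∑ n ∈ range k, b n with hT
  have hT0 : 0 ≤ T := Finset.sum_nonneg fun n _ => hb0 n
  have hkR : (1:ℝ) ≤ (k:ℝ) := by exact_mod_cast hk
  have hkmR : (k:ℝ) ≤ (m:ℝ) := by exact_mod_cast hkm
  have hm0 : (0:ℝ) < (m:ℝ) := by positivity
  -- key : (k:ℝ)/m ≤ T^2
  have hW : ∑ n ∈ range k, b n ^ 2 ≤ T ^ 2 :=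
    Finset.sum_sq_le_sq_sum_of_nonneg fun n _ => hb0 n
  have hlast : ∀ n, k ≤ n → n < m → b n ≤ b (k - 1) := fun n hn hnm =>
    hbd (k - 1) n (le_trans (Nat.sub_le _ _) hn) hnm
  have htail : ∑ n ∈ Ico k m, b n ^ 2 ≤ ((m:ℝ) - k) * b (k - 1) ^ 2 := by
    calc ∑ n ∈ Ico k m, b n ^ 2 ≤ ∑ n ∈ Ico k m, b (k - 1) ^ 2 := by
          refine Finset.sum_le_sum fun n hn => ?_
          rw [Finset.mem_Ico] at hn
          exact pow_le_pow_left₀ (hb0 n) (hlast n hn.1 hn.2) 2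
      _ = ((m:ℝ) - k) * b (k - 1) ^ 2 := by
          rw [Finset.sum_const, Nat.card_Ico, nsmul_eq_mul, Nat.cast_sub hkm]
  have hsplit : (1:ℝ) = (∑ n ∈ range k, b n ^ 2) + ∑ n ∈ Ico k m, b n ^ 2 := by
    rw [← hbn, Finset.sum_range_add_sum_Ico _ hkm]
  have hB0 : 0 ≤ b (k - 1) := hb0 _
  have hbk : (k:ℝ) * b (k - 1) ≤ T := by
    have : ∑ n ∈ range k, b (k - 1) ≤ ∑ n ∈ range k, b n := by
      refine Finset.sum_le_sum fun n hn => ?_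
      rw [Finset.mem_range] at hn
      refine hbd n (k - 1) (Nat.le_sub_one_of_lt hn) (lt_of_lt_of_le ?_ hkm)
      exact Nat.sub_lt (lt_of_lt_of_le one_pos hk) one_pos
    simpa using this
  have hkey : (k:ℝ) / m ≤ T ^ 2 := by
    rw [div_le_iff₀ hm0]
    have h1 : (1:ℝ) ≤ T ^ 2 + ((m:ℝ) - k) * b (k - 1) ^ 2 := by
      rw [hsplit]; exact add_le_add hW htail
    have h2 : ((k:ℝ) * b (k - 1)) ^ 2 ≤ T ^ 2 := by
      have hkB : 0 ≤ (k:ℝ) * b (k - 1) := by positivity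
      nlinarith [hbk, hkB, hT0]
    have h3 : (k:ℝ) ^ 2 ≤ T ^ 2 * ((k:ℝ) ^ 2 + (m:ℝ) - k) := by
      nlinarith [h1, h2, sub_nonneg.2 hkmR, sq_nonneg (b (k-1)), mul_nonneg (sub_nonneg.2 hkmR) (sub_nonneg.2 h2)]
    have h4 : (0:ℝ) ≤ ((k:ℝ) - 1) * ((m:ℝ) - k) := by
      apply mul_nonneg <;> [linarith; linarith]
    nlinarith [h3, mul_nonneg (sq_nonneg T) h4, hkR]
  calc Real.sqrt k / Real.sqrt m = Real.sqrt ((k:ℝ) / m) := by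
        rw [Real.sqrt_div (Nat.cast_nonneg k)]
    _ ≤ Real.sqrt (T ^ 2) := Real.sqrt_le_sqrt hkey
    _ = T := Real.sqrt_sq hT0

private lemma Ubound (m k : ℕ) (hkm : k ≤ m) (a : ℕ → ℝ)
    (ha0 : ∀ n, 0 ≤ a n) (han : ∑ n ∈ range m, a n ^ 2 = 1) :
    ∑ n ∈ range k, a n ≤ Real.sqrt k := by
  have hU0 : 0 ≤ ∑ n ∈ range k, a n := Finset.sum_nonneg fun n _ => ha0 n
  have h2 : (∑ n ∈ range k, a n) ^ 2 ≤ (k:ℝ) := by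
    calc (∑ n ∈ range k, a n) ^ 2 ≤ (range k).card * ∑ n ∈ range k, a n ^ 2 :=
          sq_sum_le_card_mul_sum_sq
      _ ≤ (k:ℝ) * 1 := by
          rw [Finset.card_range]
          refine mul_le_mul_of_nonneg_left ?_ (Nat.cast_nonneg k)
          rw [← han]
          exact Finset.sum_le_sum_of_subset_of_nonneg
            (Finset.range_subset_range.2 hkm) (fun n _ _ => sq_nonneg _)
      _ = (k:ℝ) := mul_one _
  calc ∑ n ∈ range k, a n = Real.sqrt ((∑ n ∈ range k, a n) ^ 2) := (Real.sqrt_sq hU0).symm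
    _ ≤ Real.sqrt k := Real.sqrt_le_sqrt h2

theorem stmt0 (m : ℕ) (u v : Fin m → ℝ)
    (hu0 : ∀ i, 0 ≤ u i) (hv0 : ∀ i, 0 ≤ v i)
    (hud : Antitone u) (hvd : Antitone v)
    (hun : ∑ i, u i ^ 2 = 1) (hvn : ∑ i, v i ^ 2 = 1) :
    1 / Real.sqrt m ≤ ∑ i, u i * v i := by
  obtain rfl | hm := Nat.eq_zero_or_pos m
  · simp at hun
  set a : ℕ → ℝ := fun n => if h : n < m then u ⟨n, h⟩ else 0 with ha
  set b : ℕ → ℝ := fun n => if h : n < m then v ⟨n, h⟩ else 0 with hb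
  have ha0 : ∀ n, 0 ≤ a n := fun n => by
    simp only [ha]; split; exacts [hu0 _, le_rfl]
  have hb0 : ∀ n, 0 ≤ b n := fun n => by
    simp only [hb]; split; exacts [hv0 _, le_rfl]
  have had : ∀ i j, i ≤ j → j < m → a j ≤ a i := by
    intro i j hij hj
    have hi : i < m := lt_of_le_of_lt hij hj
    simp only [ha, dif_pos hi, dif_pos hj]
    exact hud (show (⟨i, hi⟩ : Fin m) ≤ ⟨j, hj⟩ from hij)
  have hbd : ∀ i j, i ≤ j → j < m → b j ≤ b i := by
    intro i j hij hj
    have hi : i < m := lt_of_le_of_lt hij hj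
    simp only [hb, dif_pos hi, dif_pos hj]
    exact hvd (show (⟨i, hi⟩ : Fin m) ≤ ⟨j, hj⟩ from hij)
  have han : ∑ n ∈ range m, a n ^ 2 = 1 := by
    rw [← hun, ← Fin.sum_univ_eq_sum_range]
    exact Finset.sum_congr rfl fun i _ => by simp [ha, i.isLt]
  have hbn : ∑ n ∈ range m, b n ^ 2 = 1 := by
    rw [← hvn, ← Fin.sum_univ_eq_sum_range]
    exact Finset.sum_congr rfl fun i _ => by simp [hb, i.isLt]
  have hgoal : ∑ i, u i * v i = ∑ n ∈ range m, a n * b n := by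
    rw [← Fin.sum_univ_eq_sum_range]
    exact Finset.sum_congr rfl fun i _ => by simp [ha, hb, i.isLt]
  rw [hgoal]
  -- Abel summation, rearranged
  have parts : ∀ c : ℕ → ℝ, ∑ n ∈ range m, a n * c n =
      a (m - 1) * (∑ n ∈ range m, c n) +
        ∑ i ∈ range (m - 1), (a i - a (i + 1)) * (∑ n ∈ range (i + 1), c n) := by
    intro c
    have h := Finset.sum_range_by_parts a c m
    simp only [smul_eq_mul] at h
    rw [h]
    have h0 : ∑ i ∈ range (m - 1), (a (i + 1) - a i) * (∑ n ∈ range (i + 1), c n)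
        = - ∑ i ∈ range (m - 1), (a i - a (i + 1)) * (∑ n ∈ range (i + 1), c n) := by
      rw [← Finset.sum_neg_distrib]
      exact Finset.sum_congr rfl fun i _ => by ring
    rw [h0]; ring
  have hone : a (m - 1) * (∑ n ∈ range m, a n) +
      ∑ i ∈ range (m - 1), (a i - a (i + 1)) * (∑ n ∈ range (i + 1), a n) = 1 := by
    rw [← parts a, ← han]
    exact Finset.sum_congr rfl fun n _ => (sq (a n)).symm
  rw [parts b]
  have hc0 : ∀ i ∈ range (m - 1), 0 ≤ a i - a (i + 1) := by
    intro i hi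
    rw [Finset.mem_range] at hi
    exact sub_nonneg.2 (had i (i + 1) (Nat.le_succ i) (by omega))
  have hsm : (0:ℝ) < Real.sqrt m := Real.sqrt_pos.2 (by positivity)
  have hkey : ∀ k, 1 ≤ k → k ≤ m →
      (∑ n ∈ range k, a n) / Real.sqrt m ≤ ∑ n ∈ range k, b n := by
    intro k hk hkm
    calc (∑ n ∈ range k, a n) / Real.sqrt m ≤ Real.sqrt k / Real.sqrt m := by
          gcongr
          exact Ubound m k hkm a ha0 han
      _ ≤ ∑ n ∈ range k, b n := Tbound m k hk hkm b hb0 hbd hbn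
  calc 1 / Real.sqrt m
      = (a (m - 1) * (∑ n ∈ range m, a n) +
          ∑ i ∈ range (m - 1), (a i - a (i + 1)) * (∑ n ∈ range (i + 1), a n)) / Real.sqrt m := by
        rw [hone]
    _ = a (m - 1) * ((∑ n ∈ range m, a n) / Real.sqrt m) +
          ∑ i ∈ range (m - 1), (a i - a (i + 1)) * ((∑ n ∈ range (i + 1), a n) / Real.sqrt m) := by
        rw [add_div, Finset.sum_div]
        congr 1
        · ring
        · exact Finset.sum_congr rfl fun i _ => by ring
    _ ≤ a (m - 1) * (∑ n ∈ range m, b n) +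
          ∑ i ∈ range (m - 1), (a i - a (i + 1)) * (∑ n ∈ range (i + 1), b n) := by
        refine add_le_add (mul_le_mul_of_nonneg_left (hkey m hm le_rfl) (ha0 _)) ?_
        refine Finset.sum_le_sum fun i hi => ?_
        rw [Finset.mem_range] at hi
        refine mul_le_mul_of_nonneg_left (hkey (i + 1) (Nat.succ_le_succ (Nat.zero_le _)) (by omega)) ?_
        exact sub_nonneg.2 (had i (i + 1) (Nat.le_succ i) (by omega))
end

section
/- Let n ≤ m, let D₀ = diag(α₁, ..., α_m) and D₁ = diag(β₁, ..., β_n) be diagonal positive semidefinite matrices with entries in decreasing order, with D₀ positive definite. Then for every m×n matrix K such that D₁ − Kᵀ D₀⁻¹ K is positive semidefinite, the squared Frobenius norm satisfies ‖K‖_F² ≤ tr(D₀^{(n)} D₁) = Σ_{i=1}^n α_i β_i. -/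
/-!
With `xᵢ = ‖Kᵢ‖² / αᵢ` (row norms of `K`) the trace is `∑ᵢ αᵢ xᵢ`, so since `α` is antitone and
nonnegative, Abel summation reduces the claim to the partial-sum bounds `∑_{i<k} xᵢ ≤ ∑_{j<k} βⱼ`.
For these, keeping only the first `k` rows in `Kᵀ D₀⁻¹ K` gives a matrix `B ⪯ D₁` of rank at most
`k`. Each eigenvalue of `B` is at most the Rayleigh quotient of `D₁` at its unit eigenvector, and
summing over the at most `k` nonzero eigenvalues bounds `tr B` by `∑ⱼ βⱼ tⱼ` with `0 ≤ tⱼ ≤ 1` and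
`∑ⱼ tⱼ ≤ k`; such a sum is at most the sum of the `k` largest `βⱼ`.
-/

open Matrix Finset

theorem sum_range_mul_le_of_sum_range_le {f x y : ℕ → ℝ} {N : ℕ} (hf : Antitone f)
    (hf0 : ∀ i, 0 ≤ f i) (hxy : ∀ k ≤ N, ∑ i ∈ range k, x i ≤ ∑ i ∈ range k, y i) :
    ∑ i ∈ range N, f i * x i ≤ ∑ i ∈ range N, f i * y i := by
  have hG : ∀ k ≤ N, 0 ≤ ∑ i ∈ range k, (y i - x i) := fun k hk => by
    rw [sum_sub_distrib]; linarith [hxy k hk]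
  suffices 0 ≤ ∑ i ∈ range N, f i * (y i - x i) by
    simp only [mul_sub, sum_sub_distrib] at this; linarith
  have hparts := sum_range_by_parts f (fun i => y i - x i) N
  simp only [smul_eq_mul] at hparts
  rw [hparts]
  refine sub_nonneg.2 (le_trans ?_ (mul_nonneg (hf0 _) (hG N le_rfl)))
  refine sum_nonpos fun i hi => mul_nonpos_of_nonpos_of_nonneg ?_ (hG _ ?_)
  · exact sub_nonpos.2 (hf i.le_succ)
  · have := mem_range.1 hi
    omega

section ExtendByZero

variable {M : Type*} {m : ℕ}

def extendByZero [Zero M] (v : Fin m → M) (i : ℕ) : M := if h : i < m then v ⟨i, h⟩ else 0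

@[simp]
theorem extendByZero_val [Zero M] (v : Fin m → M) (i : Fin m) : extendByZero v i = v i := by
  simp [extendByZero]

theorem extendByZero_of_le [Zero M] (v : Fin m → M) {i : ℕ} (hi : m ≤ i) :
    extendByZero v i = 0 := by
  simp [extendByZero, hi.not_gt]

theorem sum_range_extendByZero [AddCommMonoid M] (v : Fin m → M) (k : ℕ) :
    ∑ i ∈ range k, extendByZero v i = ∑ i : Fin m with i.val < k, v i := by
  rw [sum_filter, ← sum_filter_of_ne (p := (· < m)) fun i _ h =>
      not_le.1 (mt (extendByZero_of_le v) h)]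
  simp_rw [← extendByZero_val v,
    Fin.sum_univ_eq_sum_range (fun i => if i < k then extendByZero v i else 0), ← sum_filter]
  exact sum_congr (by ext; simp; omega) fun _ _ => rfl

theorem antitone_extendByZero [Zero M] [Preorder M] {f : Fin m → M} (hf : Antitone f)
    (hf0 : ∀ i, 0 ≤ f i) : Antitone (extendByZero f) := by
  intro i j hij
  unfold extendByZero
  split_ifs with hj hi hi
  · exact hf (Fin.mk_le_mk.2 hij)
  · omega
  · exact hf0 _
  · rfl

theorem extendByZero_nonneg [Zero M] [Preorder M] {f : Fin m → M} (hf0 : ∀ i, 0 ≤ f i) (i : ℕ) :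
    0 ≤ extendByZero f i := by
  unfold extendByZero
  split_ifs
  exacts [hf0 _, le_rfl]

end ExtendByZero

theorem sum_mul_le_sum_mul_castLE {m n : ℕ} (h : n ≤ m) {f x : Fin m → ℝ} {y : Fin n → ℝ}
    (hf : Antitone f) (hf0 : ∀ i, 0 ≤ f i)
    (hxy : ∀ k, ∑ i : Fin m with i.val < k, x i ≤ ∑ j : Fin n with j.val < k, y j) :
    ∑ i, f i * x i ≤ ∑ j, f (Fin.castLE h j) * y j := by
  have key := sum_range_mul_le_of_sum_range_le (N := m) (antitone_extendByZero hf hf0)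
    (extendByZero_nonneg hf0) (x := extendByZero x) (y := extendByZero y)
    fun k _ => by simpa only [sum_range_extendByZero] using hxy k
  calc ∑ i, f i * x i = ∑ i ∈ range m, extendByZero f i * extendByZero x i := by
        simp [← Fin.sum_univ_eq_sum_range]
    _ ≤ ∑ i ∈ range m, extendByZero f i * extendByZero y i := key
    _ = ∑ i ∈ range n, extendByZero f i * extendByZero y i := by
        refine (sum_subset (range_subset_range.2 h) fun i _ hin => ?_).symm
        rw [extendByZero_of_le y (by simpa using hin), mul_zero]
    _ = ∑ j, f (Fin.castLE h j) * y j := by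
        rw [← Fin.sum_univ_eq_sum_range]
        refine sum_congr rfl fun j _ => ?_
        rw [extendByZero_val, ← Fin.val_castLE h, extendByZero_val]

theorem sum_mul_le_sum_of_sum_le_card {ι : Type*} [Fintype ι] {β t : ι → ℝ}
    {s : Finset ι} {c : ℝ} (hc : 0 ≤ c) (hs : ∀ j ∈ s, c ≤ β j) (hsc : ∀ j ∉ s, β j ≤ c)
    (ht0 : ∀ j, 0 ≤ t j) (ht1 : ∀ j, t j ≤ 1) (hts : ∑ j, t j ≤ #s) :
    ∑ j, β j * t j ≤ ∑ j ∈ s, β j := by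
  classical
  have hpt : ∀ j, β j * t j ≤ (if j ∈ s then β j else 0) + c * (t j - if j ∈ s then 1 else 0) := by
    intro j
    split_ifs with hj
    · nlinarith [hs j hj, ht1 j]
    · nlinarith [hsc j hj, ht0 j]
  calc ∑ j, β j * t j ≤ ∑ j ∈ s, β j + c * (∑ j, t j - #s) := by
        refine (sum_le_sum fun j _ => hpt j).trans_eq ?_
        simp [sum_add_distrib, ← mul_sum, sum_sub_distrib]
    _ ≤ ∑ j ∈ s, β j := by nlinarith

theorem sum_mul_le_sum_filter_val_lt {n k : ℕ} {β t : Fin n → ℝ} (hβ0 : ∀ j, 0 ≤ β j)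
    (hβd : Antitone β) (ht0 : ∀ j, 0 ≤ t j) (ht1 : ∀ j, t j ≤ 1) (hts : ∑ j, t j ≤ k) :
    ∑ j, β j * t j ≤ ∑ j : Fin n with j.val < k, β j := by
  by_cases hk : k < n
  · refine sum_mul_le_sum_of_sum_le_card (hβ0 ⟨k, hk⟩) (fun j hj => hβd ?_) (fun j hj => hβd ?_)
      ht0 ht1 ?_
    · exact Fin.mk_le_mk.2 (mem_filter.1 hj).2.le
    · exact Fin.mk_le_mk.2 (not_lt.1 fun h => hj (mem_filter.2 ⟨mem_univ j, h⟩))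
    · rwa [Fin.card_filter_val_lt, min_eq_right hk.le]
  · rw [filter_true_of_mem fun j _ => by omega]
    exact sum_le_sum fun j _ => mul_le_of_le_one_right (hβ0 j) (ht1 j)

theorem OrthonormalBasis.sum_sq_apply_eq_one {ι : Type*} [Fintype ι]
    (b : OrthonormalBasis ι ℝ (EuclideanSpace ℝ ι)) (a : ι) : ∑ j, b a j ^ 2 = 1 := by
  have h := b.orthonormal.1 a
  rw [EuclideanSpace.norm_eq, Real.sqrt_eq_one] at h
  simpa using h

theorem OrthonormalBasis.sum_sq_apply_index_eq_one {ι : Type*} [Fintype ι] [DecidableEq ι]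
    (b : OrthonormalBasis ι ℝ (EuclideanSpace ℝ ι)) (j : ι) : ∑ a, b a j ^ 2 = 1 := by
  simpa [EuclideanSpace.inner_single_right] using b.sum_sq_inner_right (EuclideanSpace.single j 1)

theorem dotProduct_diagonal_mulVec_self {ι : Type*} [Fintype ι] [DecidableEq ι] (β v : ι → ℝ) :
    v ⬝ᵥ diagonal β *ᵥ v = ∑ j, β j * v j ^ 2 := by
  simp only [dotProduct, mulVec_diagonal]
  exact sum_congr rfl fun _ _ => by ring

theorem Matrix.IsHermitian.eigenvalues_le_of_posSemidef_sub {ι : Type*} [Fintype ι]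
    [DecidableEq ι] {A B : Matrix ι ι ℝ} (hB : B.IsHermitian) (hAB : (A - B).PosSemidef) (a : ι) :
    hB.eigenvalues a ≤ hB.eigenvectorBasis a ⬝ᵥ A *ᵥ hB.eigenvectorBasis a := by
  have := hAB.dotProduct_mulVec_nonneg (hB.eigenvectorBasis a)
  rw [sub_mulVec, dotProduct_sub, sub_nonneg] at this
  simpa [hB.eigenvalues_eq a] using this

theorem trace_le_sum_filter_val_lt_of_rank_le {n k : ℕ} {β : Fin n → ℝ} (hβ0 : ∀ j, 0 ≤ β j)
    (hβd : Antitone β) {B : Matrix (Fin n) (Fin n) ℝ} (hB : B.IsHermitian)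
    (hDB : (diagonal β - B).PosSemidef) (hrank : B.rank ≤ k) :
    B.trace ≤ ∑ j : Fin n with j.val < k, β j := by
  set v := hB.eigenvectorBasis
  set S := univ.filter fun a => hB.eigenvalues a ≠ 0
  have hS : #S ≤ k := by
    rwa [← Fintype.card_subtype, ← hB.rank_eq_card_non_zero_eigs]
  calc B.trace = ∑ a ∈ S, hB.eigenvalues a := by
        simp [S, sum_filter_ne_zero, hB.trace_eq_sum_eigenvalues]
    _ ≤ ∑ a ∈ S, ∑ j, β j * v a j ^ 2 := sum_le_sum fun a _ =>
        (hB.eigenvalues_le_of_posSemidef_sub hDB a).trans_eq (dotProduct_diagonal_mulVec_self _ _)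
    _ = ∑ j, β j * ∑ a ∈ S, v a j ^ 2 := by
        rw [sum_comm]; simp only [mul_sum]
    _ ≤ ∑ j : Fin n with j.val < k, β j := by
        refine sum_mul_le_sum_filter_val_lt hβ0 hβd (fun j => sum_nonneg fun a _ => sq_nonneg _)
          (fun j => ?_) ?_
        · rw [← v.sum_sq_apply_index_eq_one j]
          exact sum_le_sum_of_subset_of_nonneg (subset_univ S) fun a _ _ => sq_nonneg _
        · rw [sum_comm, sum_congr rfl fun a _ => v.sum_sq_apply_eq_one a]
          simpa using hS

theorem trace_transpose_mul_diagonal_mul {ι κ : Type*} [Fintype ι] [Fintype κ] [DecidableEq ι]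
    (K : Matrix ι κ ℝ) (d : ι → ℝ) :
    (Kᵀ * diagonal d * K).trace = ∑ i, d i * ∑ j, K i j ^ 2 := by
  simp only [trace, diag_apply, mul_apply, transpose_apply, diagonal_apply, mul_ite, mul_zero,
    sum_ite_eq', mem_univ, if_true, mul_sum]
  rw [sum_comm]
  exact sum_congr rfl fun i _ => sum_congr rfl fun j _ => by ring

theorem posSemidef_transpose_mul_diagonal_mul {ι κ : Type*} [Fintype ι] [Fintype κ]
    [DecidableEq ι] (K : Matrix ι κ ℝ) {d : ι → ℝ} (hd : ∀ i, 0 ≤ d i) :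
    (Kᵀ * diagonal d * K).PosSemidef :=
  (posSemidef_diagonal_iff.2 hd).conjTranspose_mul_mul_same K

theorem sum_mul_sum_sq_le_sum_filter_val_lt {ι : Type*} [Fintype ι] [DecidableEq ι]
    {n k : ℕ} {β : Fin n → ℝ} (hβ0 : ∀ j, 0 ≤ β j) (hβd : Antitone β) {w : ι → ℝ}
    (hw : ∀ i, 0 ≤ w i) {K : Matrix ι (Fin n) ℝ}
    (hK : (diagonal β - Kᵀ * diagonal w * K).PosSemidef) {s : Finset ι} (hs : #s ≤ k) :
    ∑ i ∈ s, w i * ∑ j, K i j ^ 2 ≤ ∑ j : Fin n with j.val < k, β j := by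
  set d : ι → ℝ := fun i => if i ∈ s then w i else 0
  have hd : ∀ i, 0 ≤ d i := fun i => by unfold d; split_ifs <;> simp [hw]
  have hwd : ∀ i, 0 ≤ w i - d i := fun i => by unfold d; split_ifs <;> simp [hw]
  have hDB : (diagonal β - Kᵀ * diagonal d * K).PosSemidef := by
    have : diagonal β - Kᵀ * diagonal d * K
        = (diagonal β - Kᵀ * diagonal w * K) + Kᵀ * diagonal (fun i => w i - d i) * K := by
      rw [← diagonal_sub, Matrix.mul_sub, Matrix.sub_mul]; abel
    exact this ▸ hK.add (posSemidef_transpose_mul_diagonal_mul K hwd)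
  have hrank : (Kᵀ * diagonal d * K).rank ≤ k := by
    refine ((rank_mul_le_left _ _).trans (rank_mul_le_right _ _)).trans ?_
    rw [rank_diagonal, Fintype.card_subtype]
    refine (card_le_card fun i hi => ?_).trans hs
    by_contra his
    simp [d, his] at hi
  have h := trace_le_sum_filter_val_lt_of_rank_le hβ0 hβd
    (posSemidef_transpose_mul_diagonal_mul K hd).1 hDB hrank
  rw [trace_transpose_mul_diagonal_mul] at h
  simpa [d, ite_mul, sum_ite_mem] using h

theorem stmt5 (m n : ℕ) (h : n ≤ m) (α : Fin m → ℝ) (β : Fin n → ℝ)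
    (hα : ∀ i, 0 < α i) (hβ : ∀ i, 0 ≤ β i)
    (hαd : Antitone α) (hβd : Antitone β)
    (K : Matrix (Fin m) (Fin n) ℝ)
    (hschur : (Matrix.diagonal β - Kᵀ * (Matrix.diagonal α)⁻¹ * K).PosSemidef) :
    Matrix.trace (Kᵀ * K) ≤ ∑ i : Fin n, α (Fin.castLE h i) * β i := by
  have hinv : (diagonal α)⁻¹ = diagonal α⁻¹ :=
    inv_eq_left_inv (by rw [diagonal_mul_diagonal]; simp [fun i => inv_mul_cancel₀ (hα i).ne'])
  calc (Kᵀ * K).trace = ∑ i, α i * ((α i)⁻¹ * ∑ j, K i j ^ 2) := by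
        rw [← Matrix.mul_one Kᵀ, ← diagonal_one, trace_transpose_mul_diagonal_mul]
        simp [fun i => mul_inv_cancel_left₀ (hα i).ne']
    _ ≤ ∑ j, α (Fin.castLE h j) * β j :=
        sum_mul_le_sum_mul_castLE h hαd (fun i => (hα i).le) fun k =>
          sum_mul_sum_sq_le_sum_filter_val_lt hβ hβd (fun i => inv_nonneg.2 (hα i).le)
            (hinv ▸ hschur) (Fin.card_filter_val_lt.trans_le (min_le_right _ _))
end

section
/- Let Σ₀ = diag(α) ∈ ℝ^{m×m} be positive definite and Σ₁ = diag(β) ∈ ℝ^{n×n} positive semidefinite (n ≤ m). For every m×n matrix K such that Σ₁ − KᵀΣ₀⁻¹K is positive semidefinite, one has tr(K 𝟙_{n,m}) ≤ √(tr(Σ₀) tr(Σ₁)), where 𝟙_{n,m} is the n×m matrix of all ones. -/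
/-!
Testing the Schur-complement condition against the all-ones vector shows that the row sums
`w i = ∑ j, K i j` satisfy `∑ i, w i ^ 2 / α i ≤ ∑ j, β j`. Since `tr (K 𝟙) = ∑ i, w i`,
Cauchy–Schwarz with weights `α` gives `(∑ i, w i) ^ 2 ≤ (∑ i, α i) * ∑ i, w i ^ 2 / α i`.
-/

open Matrix Finset

variable {m n R : Type*} [Fintype m] [Fintype n]

theorem Matrix.trace_mul_of_one [Semiring R] (K : Matrix m n R) :
    trace (K * of fun (_ : n) (_ : m) => (1 : R)) = ∑ i, ∑ j, K i j := by
  simp [trace, mul_apply]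

theorem Matrix.inv_diagonal_of_ne_zero [Field R] [DecidableEq m] {α : m → R}
    (hα : ∀ i, α i ≠ 0) : (diagonal α)⁻¹ = diagonal α⁻¹ :=
  inv_eq_right_inv <| by rw [diagonal_mul_diagonal, ← diagonal_one]; simp [hα]

theorem Matrix.dotProduct_transpose_mul_inv_diagonal_mul_mulVec [Field R] [DecidableEq m]
    (K : Matrix m n R) {α : m → R} (hα : ∀ i, α i ≠ 0) (x : n → R) :
    x ⬝ᵥ ((Kᵀ * (diagonal α)⁻¹ * K) *ᵥ x) = ∑ i, (K *ᵥ x) i ^ 2 / α i := by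
  rw [inv_diagonal_of_ne_zero hα, ← mulVec_mulVec, ← mulVec_mulVec, mulVec_transpose,
    dotProduct_comm, ← dotProduct_mulVec]
  simp only [dotProduct, mulVec_diagonal, Pi.inv_apply]
  exact sum_congr rfl fun i _ => by ring

theorem Matrix.sum_sq_rowSum_div_le_sum_of_posSemidef [DecidableEq m] [DecidableEq n]
    (K : Matrix m n ℝ) {α : m → ℝ} (hα : ∀ i, α i ≠ 0) (β : n → ℝ)
    (h : (diagonal β - Kᵀ * (diagonal α)⁻¹ * K).PosSemidef) :
    ∑ i, (∑ j, K i j) ^ 2 / α i ≤ ∑ j, β j := by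
  have hq := h.dotProduct_mulVec_nonneg 1
  rw [star_one, sub_mulVec, dotProduct_sub,
    dotProduct_transpose_mul_inv_diagonal_mul_mulVec _ hα] at hq
  simpa [dotProduct, mulVec, diagonal_apply] using hq

theorem stmt7_general (m n : ℕ) (α : Fin m → ℝ) (β : Fin n → ℝ)
    (hα : ∀ i, 0 < α i)
    (K : Matrix (Fin m) (Fin n) ℝ)
    (hschur : (Matrix.diagonal β - Kᵀ * (Matrix.diagonal α)⁻¹ * K).PosSemidef) :
    Matrix.trace (K * (Matrix.of fun (_ : Fin n) (_ : Fin m) => (1 : ℝ)))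
      ≤ Real.sqrt ((∑ i, α i) * (∑ j, β j)) := by
  rw [trace_mul_of_one]
  apply Real.le_sqrt_of_sq_le
  calc (∑ i, ∑ j, K i j) ^ 2 ≤ (∑ i, α i) * ∑ i, (∑ j, K i j) ^ 2 / α i :=
        sum_sq_le_sum_mul_sum_of_sq_le_mul _ (fun i _ => (hα i).le)
          (fun i _ => div_nonneg (sq_nonneg _) (hα i).le)
          (fun i _ => (mul_div_cancel₀ _ (hα i).ne').ge)
    _ ≤ (∑ i, α i) * ∑ j, β j :=
        mul_le_mul_of_nonneg_left
          (sum_sq_rowSum_div_le_sum_of_posSemidef K (fun i => (hα i).ne') β hschur)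
          (sum_nonneg fun i _ => (hα i).le)

theorem stmt7 (m n : ℕ) (h : n ≤ m) (α : Fin m → ℝ) (β : Fin n → ℝ)
    (hα : ∀ i, 0 < α i) (hβ : ∀ i, 0 ≤ β i)
    (K : Matrix (Fin m) (Fin n) ℝ)
    (hschur : (Matrix.diagonal β - Kᵀ * (Matrix.diagonal α)⁻¹ * K).PosSemidef) :
    Matrix.trace (K * (Matrix.of fun (_ : Fin n) (_ : Fin m) => (1 : ℝ)))
      ≤ Real.sqrt ((∑ i, α i) * (∑ j, β j)) :=
  stmt7_general m n α β hα K hschur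
end

section
/- Let Σ₀, Σ₁ be symmetric n×n matrices with eigenvalue diagonalizations Σ₀ = P₀Λ₀P₀ᵀ (eigenvalues in non-increasing order) and Σ₁ = P₁Λ₁P₁ᵀ (eigenvalues in non-decreasing order). Then for every orthogonal matrix P, tr(Σ₀ P Σ₁ Pᵀ) ≥ tr(Λ₀Λ₁), and equality is achieved at P = P₀P₁ᵀ. -/
open Matrix Finset

/-- Rearrangement over doubly stochastic matrices. -/
lemma ds_rearrange {n : ℕ} (M : Matrix (Fin n) (Fin n) ℝ)
    (hM : M ∈ doublyStochastic ℝ (Fin n)) {l₀ l₁ : Fin n → ℝ}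
    (hl₀ : Antitone l₀) (hl₁ : Monotone l₁) :
    ∑ i, l₀ i * l₁ i ≤ ∑ i, ∑ j, M i j * (l₀ i * l₁ j) := by
  obtain ⟨w, hw0, hw1, hwM⟩ := exists_eq_sum_perm_of_mem_doublyStochastic hM
  have hperm : ∀ σ : Equiv.Perm (Fin n),
      ∑ i, ∑ j, (σ.permMatrix ℝ) i j * (l₀ i * l₁ j) = ∑ i, l₀ i * l₁ (σ i) := by
    intro σ
    refine Finset.sum_congr rfl fun i _ => ?_
    rw [Finset.sum_eq_single (σ i)]
    · simp [Equiv.Perm.permMatrix, PEquiv.toMatrix, Equiv.toPEquiv]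
    · intro j _ hj
      simp [Equiv.Perm.permMatrix, PEquiv.toMatrix, Equiv.toPEquiv, Ne.symm hj]
    · simp
  calc ∑ i, l₀ i * l₁ i
      = ∑ σ : Equiv.Perm (Fin n), w σ * ∑ i, l₀ i * l₁ i := by
        rw [← Finset.sum_mul, hw1, one_mul]
    _ ≤ ∑ σ : Equiv.Perm (Fin n), w σ * ∑ i, l₀ i * l₁ (σ i) := by
        refine Finset.sum_le_sum fun σ _ => mul_le_mul_of_nonneg_left ?_ (hw0 σ)
        simpa [smul_eq_mul] using (hl₀.antivary hl₁).sum_smul_le_sum_smul_comp_perm (σ := σ)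
    _ = ∑ i, ∑ j, M i j * (l₀ i * l₁ j) := by
        rw [← hwM]
        calc ∑ σ : Equiv.Perm (Fin n), w σ * ∑ i, l₀ i * l₁ (σ i)
            = ∑ σ : Equiv.Perm (Fin n), ∑ i, ∑ j,
                w σ * ((σ.permMatrix ℝ) i j * (l₀ i * l₁ j)) := by
              simp only [← hperm, Finset.mul_sum]
          _ = ∑ i, ∑ j, ∑ σ : Equiv.Perm (Fin n),
                w σ * ((σ.permMatrix ℝ) i j * (l₀ i * l₁ j)) := by
              rw [Finset.sum_comm]
              exact Finset.sum_congr rfl fun i _ => Finset.sum_comm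
          _ = ∑ i, ∑ j, (∑ σ : Equiv.Perm (Fin n), w σ • σ.permMatrix ℝ) i j
                * (l₀ i * l₁ j) := by
              refine Finset.sum_congr rfl fun i _ => Finset.sum_congr rfl fun j _ => ?_
              rw [Matrix.sum_apply, Finset.sum_mul]
              exact Finset.sum_congr rfl fun σ _ => by
                simp [Matrix.smul_apply, mul_assoc]

lemma trace_diag_form {n : ℕ} (l₀ l₁ : Fin n → ℝ) (Q : Matrix (Fin n) (Fin n) ℝ) :
    Matrix.trace (Matrix.diagonal l₀ * Q * Matrix.diagonal l₁ * Qᵀ)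
      = ∑ i, ∑ j, (Q i j)^2 * (l₀ i * l₁ j) := by
  have h1 : Matrix.diagonal l₀ * Q * Matrix.diagonal l₁
      = Matrix.of fun i j => l₀ i * Q i j * l₁ j := by
    ext i j
    simp [Matrix.mul_diagonal, Matrix.diagonal_mul]
  rw [h1]
  simp only [Matrix.trace, Matrix.diag, Matrix.mul_apply, Matrix.transpose_apply,
    Matrix.of_apply]
  exact Finset.sum_congr rfl fun i _ => Finset.sum_congr rfl fun j _ => by ring

/-- Anstreicher–Wolkowicz trace minimization over the orthogonal group. -/
theorem stmt10 (n : ℕ) (S₀ S₁ P₀ P₁ : Matrix (Fin n) (Fin n) ℝ) (l₀ l₁ : Fin n → ℝ)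
    (hP₀ : P₀ᵀ * P₀ = 1) (hP₁ : P₁ᵀ * P₁ = 1)
    (hS₀ : S₀ = P₀ * Matrix.diagonal l₀ * P₀ᵀ) (hS₁ : S₁ = P₁ * Matrix.diagonal l₁ * P₁ᵀ)
    (hl₀ : Antitone l₀) (hl₁ : Monotone l₁) :
    (∀ P : Matrix (Fin n) (Fin n) ℝ, Pᵀ * P = 1 →
      ∑ i, l₀ i * l₁ i ≤ Matrix.trace (S₀ * P * S₁ * Pᵀ)) ∧
    Matrix.trace (S₀ * (P₀ * P₁ᵀ) * S₁ * (P₀ * P₁ᵀ)ᵀ) = ∑ i, l₀ i * l₁ i := by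
  have h₀ : P₀ * P₀ᵀ = 1 := mul_eq_one_comm.mp hP₀
  have h₁ : P₁ * P₁ᵀ = 1 := mul_eq_one_comm.mp hP₁
  -- general trace formula (no orthogonality of P needed)
  have key : ∀ P : Matrix (Fin n) (Fin n) ℝ,
      Matrix.trace (S₀ * P * S₁ * Pᵀ)
        = ∑ i, ∑ j, ((P₀ᵀ * P * P₁) i j)^2 * (l₀ i * l₁ j) := by
    intro P
    set Q := P₀ᵀ * P * P₁ with hQ
    have e1 : S₀ * P * S₁ * Pᵀ
        = P₀ * (Matrix.diagonal l₀ * Q * Matrix.diagonal l₁ * (P₁ᵀ * Pᵀ)) := by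
      rw [hS₀, hS₁, hQ]
      simp only [Matrix.mul_assoc]
    have e2 : Matrix.diagonal l₀ * Q * Matrix.diagonal l₁ * (P₁ᵀ * Pᵀ) * P₀
        = Matrix.diagonal l₀ * Q * Matrix.diagonal l₁ * Qᵀ := by
      rw [hQ]
      simp [Matrix.transpose_mul, Matrix.mul_assoc]
    rw [e1, Matrix.trace_mul_comm, e2, trace_diag_form]
  constructor
  · intro P hP
    rw [key P]
    set Q := P₀ᵀ * P * P₁ with hQ
    have hQQ : Qᵀ * Q = 1 := by
      rw [hQ]
      simp only [Matrix.transpose_mul, Matrix.mul_assoc]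
      rw [show P₁ᵀ * (Pᵀ * (P₀ᵀᵀ * (P₀ᵀ * (P * P₁)))) =
            P₁ᵀ * (Pᵀ * ((P₀ * P₀ᵀ) * (P * P₁))) by simp [Matrix.mul_assoc], h₀]
      rw [show P₁ᵀ * (Pᵀ * (1 * (P * P₁))) = P₁ᵀ * ((Pᵀ * P) * P₁) by
            simp [Matrix.mul_assoc], hP]
      simp [hP₁]
    have hQQ' : Q * Qᵀ = 1 := mul_eq_one_comm.mp hQQ
    have hDS : Matrix.of (fun i j => (Q i j)^2) ∈ doublyStochastic ℝ (Fin n) := by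
      rw [mem_doublyStochastic_iff_sum]
      refine ⟨fun i j => by simpa using sq_nonneg (Q i j), fun i => ?_, fun j => ?_⟩
      · have := congrFun (congrFun hQQ' i) i
        simpa [Matrix.mul_apply, sq, Matrix.one_apply] using this
      · have := congrFun (congrFun hQQ j) j
        simpa [Matrix.mul_apply, sq, Matrix.one_apply] using this
    have := ds_rearrange _ hDS hl₀ hl₁
    simpa using this
  · rw [key (P₀ * P₁ᵀ)]
    have hQ1 : P₀ᵀ * (P₀ * P₁ᵀ) * P₁ = 1 := by
      rw [show P₀ᵀ * (P₀ * P₁ᵀ) * P₁ = (P₀ᵀ * P₀) * (P₁ᵀ * P₁) by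
            simp [Matrix.mul_assoc], hP₀, hP₁, one_mul]
    rw [hQ1]
    simp [Matrix.one_apply, sq]
end

section
/- Let n ≤ m, μ = N(m₀, Σ₀) on ℝ^m with Σ₀ nonsingular and ν = N(m₁, Σ₁) on ℝ^n, with sorted eigenvalue matrices D₀ and D₁ (decreasing). Then GGW₂²(μ,ν) − LGW₂²(μ,ν) = 8(‖D₀‖_F ‖D₁‖_F − tr(D₀^{(n)} D₁)) ≤ 8 ‖Σ₀‖_F ‖Σ₁‖_F (1 − 1/√m). -/
open Finset

lemma tele (u : ℕ → ℝ) (i m : ℕ) (h : i ≤ m) :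
    ∑ k ∈ Finset.Ico i m, (u k - u (k+1)) = u i - u m := by
  induction m, h using Nat.le_induction with
  | base => simp
  | succ m hm ih => rw [Finset.sum_Ico_succ_top hm, ih]; ring

lemma ico_ite (m i : ℕ) (c : ℕ → ℝ) :
    ∑ k ∈ Finset.Ico i m, c k = ∑ k ∈ Finset.range m, if i ≤ k then c k else 0 := by
  rw [Finset.sum_ite, Finset.sum_const_zero, add_zero]
  congr 1
  ext k
  simp [Finset.mem_filter, Finset.mem_Ico, Finset.mem_range]
  omega

lemma count_ite (m N : ℕ) (hN : N < m) (c : ℝ) :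
    ∑ i ∈ Finset.range m, (if i ≤ N then c else 0) = (N + 1 : ℝ) * c := by
  rw [Finset.sum_ite, Finset.sum_const_zero, add_zero, Finset.sum_const]
  have : Finset.filter (fun i => i ≤ N) (Finset.range m) = Finset.range (N+1) := by
    ext i; simp [Finset.mem_filter, Finset.mem_range]; omega
  rw [this, Finset.card_range]
  push_cast [nsmul_eq_mul]
  ring

lemma double_sum (m : ℕ) (a b : ℕ → ℝ) :
    ∑ i ∈ Finset.range m, (∑ k ∈ Finset.Ico i m, a k) * (∑ l ∈ Finset.Ico i m, b l)
      = ∑ k ∈ Finset.range m, ∑ l ∈ Finset.range m, ((min k l : ℕ) + 1 : ℝ) * (a k * b l) := by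
  have h1 : ∀ i ∈ Finset.range m,
      (∑ k ∈ Finset.Ico i m, a k) * (∑ l ∈ Finset.Ico i m, b l)
      = ∑ k ∈ Finset.range m, ∑ l ∈ Finset.range m,
          (if i ≤ k then a k else 0) * (if i ≤ l then b l else 0) := by
    intro i _
    rw [ico_ite m i a, ico_ite m i b, Finset.sum_mul_sum]
  rw [Finset.sum_congr rfl h1]
  rw [Finset.sum_comm]
  refine Finset.sum_congr rfl fun k hk => ?_
  rw [Finset.sum_comm]
  refine Finset.sum_congr rfl fun l hl => ?_
  have : ∀ i, (if i ≤ k then a k else 0) * (if i ≤ l then b l else 0)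
      = (if i ≤ min k l then a k * b l else 0) := by
    intro i; rw [ite_zero_mul_ite_zero]; simp only [Nat.le_min]
  rw [Finset.sum_congr rfl fun i _ => this i, count_ite]
  simp [Finset.mem_range] at hk hl
  omega

/-- Core inequality: for antitone nonneg sequences vanishing at `m`,
`‖u‖‖v‖ ≤ √m ⟨u,v⟩`. -/
lemma core (m : ℕ) (u v : ℕ → ℝ) (hu : Antitone u) (hv : Antitone v)
    (hu0 : ∀ i, 0 ≤ u i) (hv0 : ∀ i, 0 ≤ v i) (hum : u m = 0) (hvm : v m = 0) :
    Real.sqrt (∑ i ∈ Finset.range m, (u i)^2) * Real.sqrt (∑ i ∈ Finset.range m, (v i)^2)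
      ≤ Real.sqrt m * ∑ i ∈ Finset.range m, u i * v i := by
  set a : ℕ → ℝ := fun k => u k - u (k+1) with ha_def
  set b : ℕ → ℝ := fun k => v k - v (k+1) with hb_def
  have ha : ∀ k, 0 ≤ a k := fun k => sub_nonneg.2 (hu (Nat.le_succ k))
  have hb : ∀ k, 0 ≤ b k := fun k => sub_nonneg.2 (hv (Nat.le_succ k))
  have hrepu : ∀ i ∈ Finset.range m, u i = ∑ k ∈ Finset.Ico i m, a k := by
    intro i hi
    rw [ha_def]
    rw [tele u i m (le_of_lt (Finset.mem_range.1 hi)), hum, sub_zero]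
  have hrepv : ∀ i ∈ Finset.range m, v i = ∑ k ∈ Finset.Ico i m, b k := by
    intro i hi
    rw [hb_def]
    rw [tele v i m (le_of_lt (Finset.mem_range.1 hi)), hvm, sub_zero]
  -- the three double-sum identities
  have key_uv : ∑ i ∈ Finset.range m, u i * v i
      = ∑ k ∈ Finset.range m, ∑ l ∈ Finset.range m, ((min k l : ℕ) + 1 : ℝ) * (a k * b l) := by
    rw [← double_sum m a b]
    exact Finset.sum_congr rfl fun i hi => by rw [hrepu i hi, hrepv i hi]
  have key_uu : ∑ i ∈ Finset.range m, (u i)^2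
      = ∑ k ∈ Finset.range m, ∑ l ∈ Finset.range m, ((min k l : ℕ) + 1 : ℝ) * (a k * a l) := by
    rw [← double_sum m a a]
    exact Finset.sum_congr rfl fun i hi => by rw [hrepu i hi]; ring
  have key_vv : ∑ i ∈ Finset.range m, (v i)^2
      = ∑ k ∈ Finset.range m, ∑ l ∈ Finset.range m, ((min k l : ℕ) + 1 : ℝ) * (b k * b l) := by
    rw [← double_sum m b b]
    exact Finset.sum_congr rfl fun i hi => by rw [hrepv i hi]; ring
  set Sa : ℝ := ∑ k ∈ Finset.range m, Real.sqrt (k+1) * a k with hSa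
  set Sb : ℝ := ∑ k ∈ Finset.range m, Real.sqrt (k+1) * b k with hSb
  have hSa0 : 0 ≤ Sa := Finset.sum_nonneg fun k _ => mul_nonneg (Real.sqrt_nonneg _) (ha k)
  have hSb0 : 0 ≤ Sb := Finset.sum_nonneg fun k _ => mul_nonneg (Real.sqrt_nonneg _) (hb k)
  -- min k l + 1 ≤ √(k+1)√(l+1)
  have hmin_le : ∀ k l : ℕ, ((min k l : ℕ) + 1 : ℝ) ≤ Real.sqrt (k+1) * Real.sqrt (l+1) := by
    intro k l
    rw [← Real.sqrt_mul_self (by positivity : (0:ℝ) ≤ ((min k l : ℕ) + 1 : ℝ)),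
      ← Real.sqrt_mul (by positivity)]
    apply Real.sqrt_le_sqrt
    have h1 : ((min k l : ℕ) : ℝ) ≤ (k : ℝ) := by exact_mod_cast min_le_left k l
    have h2 : ((min k l : ℕ) : ℝ) ≤ (l : ℝ) := by exact_mod_cast min_le_right k l
    nlinarith [Nat.cast_nonneg (α := ℝ) (min k l)]
  -- √(k+1)√(l+1) ≤ √m (min k l + 1) for k,l < m
  have hle_min : ∀ k l : ℕ, k < m → l < m →
      Real.sqrt (k+1) * Real.sqrt (l+1) ≤ Real.sqrt m * ((min k l : ℕ) + 1 : ℝ) := by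
    intro k l hk hl
    rw [← Real.sqrt_mul (by positivity)]
    have : Real.sqrt m * ((min k l : ℕ) + 1 : ℝ)
        = Real.sqrt ((m : ℝ) * ((min k l : ℕ) + 1 : ℝ)^2) := by
      rw [Real.sqrt_mul (by positivity), Real.sqrt_sq (by positivity)]
    rw [this]
    apply Real.sqrt_le_sqrt
    rcases le_total k l with hkl | hkl
    · have hmin : min k l = k := min_eq_left hkl
      rw [hmin]
      have hlm : (l : ℝ) + 1 ≤ (m : ℝ) := by exact_mod_cast Nat.succ_le_of_lt hl
      nlinarith [mul_nonneg (Nat.cast_nonneg (α := ℝ) m)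
          (mul_nonneg (by positivity : (0:ℝ) ≤ (k:ℝ)+1) (Nat.cast_nonneg (α := ℝ) k)),
        mul_le_mul_of_nonneg_left hlm (by positivity : (0:ℝ) ≤ (k:ℝ)+1)]
    · have hmin : min k l = l := min_eq_right hkl
      rw [hmin]
      have hkm : (k : ℝ) + 1 ≤ (m : ℝ) := by exact_mod_cast Nat.succ_le_of_lt hk
      nlinarith [mul_nonneg (Nat.cast_nonneg (α := ℝ) m)
          (mul_nonneg (by positivity : (0:ℝ) ≤ (l:ℝ)+1) (Nat.cast_nonneg (α := ℝ) l)),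
        mul_le_mul_of_nonneg_left hkm (by positivity : (0:ℝ) ≤ (l:ℝ)+1)]
  -- ‖u‖ ≤ Sa
  have hnu : Real.sqrt (∑ i ∈ Finset.range m, (u i)^2) ≤ Sa := by
    have h1 : ∑ i ∈ Finset.range m, (u i)^2 ≤ Sa^2 := by
      rw [key_uu, hSa, sq, Finset.sum_mul_sum]
      apply Finset.sum_le_sum
      intro k _
      apply Finset.sum_le_sum
      intro l _
      nlinarith [mul_le_mul_of_nonneg_right (hmin_le k l) (mul_nonneg (ha k) (ha l))]
    calc Real.sqrt (∑ i ∈ Finset.range m, (u i)^2) ≤ Real.sqrt (Sa^2) :=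
          Real.sqrt_le_sqrt h1
      _ = Sa := Real.sqrt_sq hSa0
  have hnv : Real.sqrt (∑ i ∈ Finset.range m, (v i)^2) ≤ Sb := by
    have h1 : ∑ i ∈ Finset.range m, (v i)^2 ≤ Sb^2 := by
      rw [key_vv, hSb, sq, Finset.sum_mul_sum]
      apply Finset.sum_le_sum
      intro k _
      apply Finset.sum_le_sum
      intro l _
      nlinarith [mul_le_mul_of_nonneg_right (hmin_le k l) (mul_nonneg (hb k) (hb l))]
    calc Real.sqrt (∑ i ∈ Finset.range m, (v i)^2) ≤ Real.sqrt (Sb^2) :=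
          Real.sqrt_le_sqrt h1
      _ = Sb := Real.sqrt_sq hSb0
  have hprod : Sa * Sb = ∑ k ∈ Finset.range m, ∑ l ∈ Finset.range m,
      (Real.sqrt (k+1) * a k) * (Real.sqrt (l+1) * b l) := by
    rw [hSa, hSb, Finset.sum_mul_sum]
  have hfin : Sa * Sb ≤ Real.sqrt m * ∑ i ∈ Finset.range m, u i * v i := by
    rw [hprod, key_uv, Finset.mul_sum]
    apply Finset.sum_le_sum
    intro k hk
    rw [Finset.mul_sum]
    apply Finset.sum_le_sum
    intro l hl
    nlinarith [mul_le_mul_of_nonneg_right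
      (hle_min k l (Finset.mem_range.1 hk) (Finset.mem_range.1 hl))
      (mul_nonneg (ha k) (hb l))]
  calc Real.sqrt (∑ i ∈ Finset.range m, (u i)^2) * Real.sqrt (∑ i ∈ Finset.range m, (v i)^2)
      ≤ Sa * Sb := mul_le_mul hnu hnv (Real.sqrt_nonneg _) hSa0
    _ ≤ _ := hfin

open Finset

/-- Bound on the difference GGW₂²−LGW₂², expressed via the sorted eigenvalue vectors α of Σ₀
and β of Σ₁. -/
theorem stmt16 (m n : ℕ) (h : n ≤ m) (α : Fin m → ℝ) (β : Fin n → ℝ)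
    (hα : ∀ i, 0 < α i) (hβ : ∀ i, 0 ≤ β i)
    (hαd : Antitone α) (hβd : Antitone β) :
    (4 * ((∑ i, α i) - ∑ j, β j) ^ 2
        + 8 * (∑ j : Fin n, (α (Fin.castLE h j) - β j) ^ 2)
        + 8 * ((∑ i, α i ^ 2) - ∑ j : Fin n, α (Fin.castLE h j) ^ 2))
      - (4 * ((∑ i, α i) - ∑ j, β j) ^ 2
        + 4 * (Real.sqrt (∑ i, α i ^ 2) - Real.sqrt (∑ j, β j ^ 2)) ^ 2
        + 4 * (∑ j : Fin n, (α (Fin.castLE h j) - β j) ^ 2)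
        + 4 * ((∑ i, α i ^ 2) - ∑ j : Fin n, α (Fin.castLE h j) ^ 2))
      = 8 * (Real.sqrt (∑ i, α i ^ 2) * Real.sqrt (∑ j, β j ^ 2)
          - ∑ j : Fin n, α (Fin.castLE h j) * β j) ∧
    8 * (Real.sqrt (∑ i, α i ^ 2) * Real.sqrt (∑ j, β j ^ 2)
          - ∑ j : Fin n, α (Fin.castLE h j) * β j)
      ≤ 8 * Real.sqrt (∑ i, α i ^ 2) * Real.sqrt (∑ j, β j ^ 2)
          * (1 - 1 / Real.sqrt m) := by
  have hA2 : (0:ℝ) ≤ ∑ i, α i ^ 2 := by positivity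
  have hB2 : (0:ℝ) ≤ ∑ j, β j ^ 2 := by positivity
  have hs : Real.sqrt (∑ i, α i ^ 2) ^ 2 = ∑ i, α i ^ 2 := Real.sq_sqrt hA2
  have ht : Real.sqrt (∑ j, β j ^ 2) ^ 2 = ∑ j, β j ^ 2 := Real.sq_sqrt hB2
  constructor
  · have hC : ∑ j : Fin n, (α (Fin.castLE h j) - β j) ^ 2
        = (∑ j : Fin n, α (Fin.castLE h j) ^ 2)
          - 2 * (∑ j : Fin n, α (Fin.castLE h j) * β j) + ∑ j, β j ^ 2 := by
      rw [Finset.mul_sum, ← Finset.sum_sub_distrib, ← Finset.sum_add_distrib]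
      exact Finset.sum_congr rfl fun j _ => by ring
    rw [hC]
    linear_combination (-4 : ℝ) * hs + (-4 : ℝ) * ht
  · rcases Nat.eq_zero_or_pos m with hm0 | hm
    · have hn0 : n = 0 := by omega
      subst hm0; subst hn0
      simp
    · -- pad to ℕ-indexed sequences
      set U : ℕ → ℝ := fun i => if h' : i < m then α ⟨i, h'⟩ else 0 with hU_def
      set V : ℕ → ℝ := fun i => if h' : i < n then β ⟨i, h'⟩ else 0 with hV_def
      have hU0 : ∀ i, 0 ≤ U i := by
        intro i; rw [hU_def]; dsimp only
        split_ifs with h'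
        · exact (hα _).le
        · exact le_rfl
      have hV0 : ∀ i, 0 ≤ V i := by
        intro i; rw [hV_def]; dsimp only
        split_ifs with h'
        · exact hβ _
        · exact le_rfl
      have hUa : Antitone U := by
        intro i j hij
        rw [hU_def]; dsimp only
        by_cases hj : j < m
        · have hi : i < m := lt_of_le_of_lt hij hj
          rw [dif_pos hi, dif_pos hj]
          exact hαd (show (⟨i, hi⟩ : Fin m) ≤ ⟨j, hj⟩ from hij)
        · rw [dif_neg hj]
          split_ifs with hi
          · exact (hα _).le
          · exact le_refl 0
      have hVa : Antitone V := by
        intro i j hij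
        rw [hV_def]; dsimp only
        by_cases hj : j < n
        · have hi : i < n := lt_of_le_of_lt hij hj
          rw [dif_pos hi, dif_pos hj]
          exact hβd (show (⟨i, hi⟩ : Fin n) ≤ ⟨j, hj⟩ from hij)
        · rw [dif_neg hj]
          split_ifs with hi
          · exact hβ _
          · exact le_refl 0
      have hUm : U m = 0 := by rw [hU_def]; dsimp only; rw [dif_neg (lt_irrefl m)]
      have hVm : V m = 0 := by rw [hV_def]; dsimp only; rw [dif_neg (by omega)]
      have e1 : ∑ i ∈ Finset.range m, (U i)^2 = ∑ i, α i ^ 2 := by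
        rw [← Fin.sum_univ_eq_sum_range (fun i => (U i)^2) m]
        refine Finset.sum_congr rfl fun i _ => ?_
        rw [hU_def]; dsimp only
        rw [dif_pos i.isLt]
      have e2 : ∑ i ∈ Finset.range m, (V i)^2 = ∑ j, β j ^ 2 := by
        rw [← Finset.sum_subset (Finset.range_subset_range.2 h)
          (fun x _ hx => by
            rw [hV_def]; dsimp only
            rw [dif_neg (by simpa using hx)]; ring)]
        rw [← Fin.sum_univ_eq_sum_range (fun i => (V i)^2) n]
        refine Finset.sum_congr rfl fun j _ => ?_
        rw [hV_def]; dsimp only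
        rw [dif_pos j.isLt]
      have e3 : ∑ i ∈ Finset.range m, U i * V i = ∑ j : Fin n, α (Fin.castLE h j) * β j := by
        rw [← Finset.sum_subset (Finset.range_subset_range.2 h)
          (fun x _ hx => by
            rw [hV_def]; dsimp only
            rw [dif_neg (by simpa using hx)]; ring)]
        rw [← Fin.sum_univ_eq_sum_range (fun i => U i * V i) n]
        refine Finset.sum_congr rfl fun j _ => ?_
        rw [hU_def, hV_def]; dsimp only
        rw [dif_pos j.isLt, dif_pos (lt_of_lt_of_le j.isLt h)]
        rfl
      have hcore := core m U V hUa hVa hU0 hV0 hUm hVm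
      rw [e1, e2, e3] at hcore
      have hsm : 0 < Real.sqrt m := Real.sqrt_pos.2 (by exact_mod_cast hm)
      have h2 : Real.sqrt (∑ i, α i ^ 2) * Real.sqrt (∑ j, β j ^ 2) / Real.sqrt m
          ≤ ∑ j : Fin n, α (Fin.castLE h j) * β j := by
        rw [div_le_iff₀ hsm]
        linarith [hcore]
      have expand : 8 * Real.sqrt (∑ i, α i ^ 2) * Real.sqrt (∑ j, β j ^ 2)
            * (1 - 1 / Real.sqrt m)
          = 8 * (Real.sqrt (∑ i, α i ^ 2) * Real.sqrt (∑ j, β j ^ 2))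
            - 8 * (Real.sqrt (∑ i, α i ^ 2) * Real.sqrt (∑ j, β j ^ 2) / Real.sqrt m) := by
        ring
      rw [expand]
      linarith [h2]
end
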